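/- arXiv:1206.2717 — 12 statements merged into one kernel-verified Lean document; each statement's English description precedes it below -/
import Mathlib

section
/- Let K be a field, F(y,z) ∈ K[y,z] a polynomial of total degree at most d, and B, C ⊆ K finite sets with |B| = |C| = m. If F(y_i, z_j) = 0 for at least 2dm pairs (y_i, z_j) ∈ B × C, then F is the zero polynomial. -/
/-!
The Schwartz–Zippel lemma, in its form for a product of finite sets `S i`, bounds the zeros of a
nonzero polynomial of total degree at most `d` in a grid whose sides all have `m` elements by
`d · m ^ (n - 1)`. In two variables this is `d · m < 2 · d · m`.
-/

open Finset Fintype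

namespace MvPolynomial

theorem card_filter_piFinset_eval_eq_zero_mul_le {R : Type*} [CommRing R] [IsDomain R]
    [DecidableEq R] {n m : ℕ} {p : MvPolynomial (Fin n) R} (hp : p ≠ 0)
    (S : Fin n → Finset R) (hS : ∀ i, #(S i) = m) :
    #{x ∈ piFinset S | eval x p = 0} * m ≤ p.totalDegree * m ^ n := by
  rcases Nat.eq_zero_or_pos m with rfl | hm
  · simp
  have h : (#{x ∈ piFinset S | eval x p = 0} : ℚ≥0) / (m ^ n : ℚ≥0) ≤ p.totalDegree / m :=
    calc
      _ = #{x ∈ piFinset S | eval x p = 0} / ∏ i, (#(S i) : ℚ≥0) := by simp [hS]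
      _ ≤ p.support.sup fun s ↦ ∑ i, (s i / #(S i) : ℚ≥0) := schwartz_zippel_sup_sum hp S
      _ = p.totalDegree / m := by
        simp_rw [hS, totalDegree, Nat.cast_finsetSup]
        rw [sup_div₀ (by positivity)]
        simp [← sum_div, Finsupp.sum_fintype]
  rw [div_le_div_iff₀ (by positivity) (by positivity)] at h
  exact_mod_cast h

end MvPolynomial

theorem Finset.card_filter_product_eq_card_filter_piFinset {α : Type*} [DecidableEq α]
    (B C : Finset α) (P : (Fin 2 → α) → Prop) [DecidablePred P] :
    #{p ∈ B ×ˢ C | P ![p.1, p.2]} = #{x ∈ piFinset ![B, C] | P x} := by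
  have eta (x : Fin 2 → α) : ![x 0, x 1] = x := by ext i; fin_cases i <;> rfl
  refine card_nbij' (fun p => ![p.1, p.2]) (fun x => (x 0, x 1)) ?_ ?_ (fun _ _ => rfl)
    (fun x _ => eta x)
  · intro p hp
    simp_all [Fin.forall_fin_two]
  · intro x hx
    simp_all [Fin.forall_fin_two]

open MvPolynomial

/-- Vanishing Lemma: if a two-variable polynomial of total degree at most `d`
vanishes at `2*d*m` points of a grid `B × C` with `|B| = |C| = m`, it is zero. -/
theorem stmt_0 {K : Type*} [Field K] [DecidableEq K]
    (d m : ℕ) (hd : 0 < d) (hm : 0 < m)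
    (F : MvPolynomial (Fin 2) K) (hdeg : F.totalDegree ≤ d)
    (B C : Finset K) (hB : B.card = m) (hC : C.card = m)
    (hzeros : 2 * d * m ≤
      ((B ×ˢ C).filter fun p => MvPolynomial.eval ![p.1, p.2] F = 0).card) :
    F = 0 := by
  by_contra hF
  have hSZ := card_filter_piFinset_eval_eq_zero_mul_le (m := m) hF ![B, C]
    (by simp [Fin.forall_fin_two, hB, hC])
  rw [← card_filter_product_eq_card_filter_piFinset] at hSZ
  have : 2 * d * m * m ≤ d * m ^ 2 :=
    calc _ ≤ _ := Nat.mul_le_mul_right m hzeros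
      _ ≤ _ := hSZ
      _ ≤ _ := Nat.mul_le_mul_right _ hdeg
  nlinarith [Nat.mul_pos hd (Nat.mul_pos hm hm)]
end

section
/- Let ℓ_i, ℓ_j, ℓ_k, ℓ_l be non-vertical, non-horizontal lines in ℝ², viewed as invertible affine maps ℝ → ℝ. If ℓ_i ∘ ℓ_j^{-1} = ℓ_k ∘ ℓ_l^{-1} and ℓ_j^{-1} ∘ ℓ_i = ℓ_l^{-1} ∘ ℓ_k as affine maps, and ℓ_i and ℓ_j intersect at a point (u,v), then ℓ_k and ℓ_l also both pass through (u,v); in particular all four lines are concurrent. -/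
open Function

/-- `u` is fixed by `fj⁻¹ ∘ fi = fl⁻¹ ∘ fk`, which forces `fk u = fl u`; this common value is then
fixed by `fi ∘ fj⁻¹ = fk ∘ fl⁻¹`, whose only fixed point is `v`. -/
theorem apply_eq_of_symm_comp_eq_of_comp_symm_eq {α β : Type*} {fi fk : α → β} {fj fl : α ≃ β}
    (h1 : ∀ y, fi (fj.symm y) = fk (fl.symm y)) (h2 : ∀ x, fj.symm (fi x) = fl.symm (fk x))
    (hfix : (fixedPoints (fi ∘ fj.symm)).Subsingleton) {u : α} {v : β}
    (hi : fi u = v) (hj : fj u = v) : fk u = v ∧ fl u = v := by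
  have hu : fj.symm v = u := fj.symm_apply_eq.mpr hj.symm
  have hkl : fk u = fl u := by
    rw [← fl.symm_apply_eq, ← h2, hi, hu]
  have hk_fixed : IsFixedPt (fi ∘ fj.symm) (fk u) := by
    simp only [IsFixedPt, comp_apply, h1, hkl, Equiv.symm_apply_apply]
  have hv_fixed : IsFixedPt (fi ∘ fj.symm) v := by
    simp only [IsFixedPt, comp_apply, hu, hi]
  have hk : fk u = v := hfix hk_fixed hv_fixed
  exact ⟨hk, hkl ▸ hk⟩

section Lines

variable {K : Type*} [Field K]

def lineEquiv (a b : K) (ha : a ≠ 0) : K ≃ K where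
  toFun t := a * t + b
  invFun t := (t - b) / a
  left_inv t := by field_simp; ring
  right_inv t := by field_simp; ring

theorem slope_ne_of_ne_of_apply_eq {a b a' b' u : K} (hne : (a, b) ≠ (a', b'))
    (hu : a * u + b = a' * u + b') : a ≠ a' := by
  rintro rfl
  exact hne (Prod.ext rfl (add_left_cancel hu))

theorem subsingleton_fixedPoints_line_comp_symm {a b a' b' : K} (ha' : a' ≠ 0) (hne : a ≠ a') :
    (fixedPoints fun t ↦ a * ((t - b') / a') + b).Subsingleton := by
  intro x (hx : a * ((x - b') / a') + b = x) y (hy : a * ((y - b') / a') + b = y)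
  have hdiff : (a - a') * (x - y) = 0 := by
    field_simp at hx hy
    linear_combination hx - hy
  exact sub_eq_zero.mp ((mul_eq_zero.mp hdiff).resolve_left (sub_ne_zero.mpr hne))

end Lines

theorem stmt_2_general (ai bi aj bj ak bk al bl u v : ℝ)
    (haj : aj ≠ 0) (hal : al ≠ 0)
    (hij : (ai, bi) ≠ (aj, bj))
    (h1 : ∀ t : ℝ, ai * ((t - bj) / aj) + bi = ak * ((t - bl) / al) + bk)
    (h2 : ∀ t : ℝ, (ai * t + bi - bj) / aj = (ak * t + bk - bl) / al)
    (hu : v = ai * u + bi) (hv : v = aj * u + bj) :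
    v = ak * u + bk ∧ v = al * u + bl := by
  have hslope : ai ≠ aj := slope_ne_of_ne_of_apply_eq hij (hu.symm.trans hv)
  obtain ⟨hk, hl⟩ := apply_eq_of_symm_comp_eq_of_comp_symm_eq (fi := fun t ↦ ai * t + bi)
    (fk := fun t ↦ ak * t + bk) (fj := lineEquiv aj bj haj) (fl := lineEquiv al bl hal) h1 h2
    (subsingleton_fixedPoints_line_comp_symm haj hslope) hu.symm hv.symm
  exact ⟨hk.symm, hl.symm⟩

/-- If `ℓᵢ ∘ ℓⱼ⁻¹ = ℓₖ ∘ ℓₗ⁻¹` and `ℓⱼ⁻¹ ∘ ℓᵢ = ℓₗ⁻¹ ∘ ℓₖ` as affine maps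
(lines `ℓ(t) = a·t + b` with `a ≠ 0`), and the (distinct) lines `ℓᵢ, ℓⱼ`
intersect at `(u, v)`, then `ℓₖ` and `ℓₗ` also pass through `(u, v)`;
in particular all four lines are concurrent. -/
theorem stmt_2 (ai bi aj bj ak bk al bl u v : ℝ)
    (hai : ai ≠ 0) (haj : aj ≠ 0) (hak : ak ≠ 0) (hal : al ≠ 0)
    (hij : (ai, bi) ≠ (aj, bj))
    (h1 : ∀ t : ℝ, ai * ((t - bj) / aj) + bi = ak * ((t - bl) / al) + bk)
    (h2 : ∀ t : ℝ, (ai * t + bi - bj) / aj = (ak * t + bk - bl) / al)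
    (hu : v = ai * u + bi) (hv : v = aj * u + bj) :
    v = ak * u + bk ∧ v = al * u + bl :=
  stmt_2_general ai bi aj bj ak bk al bl u v haj hal hij h1 h2 hu hv
end

section
/- Let L be a finite set of m lines in ℝ² such that no p of them are mutually parallel and no q of them are concurrent through a common point, where p, q ≥ 2. Then L contains a subset of at least √(m/(p+q)) lines in general position (no two parallel and no three concurrent). -/
/-!
Take a maximal subset `S ⊆ L` in general position. Every line of `L` that cannot be added to `S`
is either parallel to a line of `S` or passes through the meeting point of two lines of `S`.
There are fewer than `p` lines in each of the `|S|` parallel classes and fewer than `q` through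
each of the fewer than `|S|²` meeting points, so `|L| ≤ (p + q) |S|²`.
-/

open Module Finset

namespace AffineSubspace

variable {k V P : Type*} [DivisionRing k] [AddCommGroup V] [Module k V] [AddTorsor V P]

theorem eq_of_mem_of_mem_of_direction_ne {a b : AffineSubspace k P}
    (ha : finrank k a.direction = 1) (hb : finrank k b.direction = 1)
    (hab : a.direction ≠ b.direction) {x y : P}
    (hxa : x ∈ a) (hxb : x ∈ b) (hya : y ∈ a) (hyb : y ∈ b) : x = y := by
  by_contra hxy
  have hv : y -ᵥ x ≠ 0 := vsub_ne_zero.mpr (Ne.symm hxy)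
  exact hab <|
    (eq_span_singleton_of_mem_of_finrank_eq_one ha (vsub_mem_direction hya hxa) hv).trans
      (eq_span_singleton_of_mem_of_finrank_eq_one hb (vsub_mem_direction hyb hxb) hv).symm

end AffineSubspace

theorem Finset.exists_subset_forall_not_insert {α : Type*} [DecidableEq α]
    (L : Finset α) (Q : Finset α → Prop) (h₀ : Q ∅) :
    ∃ S ⊆ L, Q S ∧ ∀ ℓ ∈ L, ℓ ∉ S → ¬ Q (insert ℓ S) := by
  classical
  obtain ⟨S, hS, hmax⟩ := exists_max_image (L.powerset.filter Q) card
    ⟨∅, mem_filter.mpr ⟨empty_mem_powerset L, h₀⟩⟩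
  rw [mem_filter, mem_powerset] at hS
  refine ⟨S, hS.1, hS.2, fun ℓ hℓL hℓS hQ => ?_⟩
  have := hmax (insert ℓ S) (mem_filter.mpr ⟨mem_powerset.mpr (insert_subset hℓL hS.1), hQ⟩)
  rw [card_insert_of_notMem hℓS] at this
  omega

namespace LineArrangement

variable {k V P : Type*} [DivisionRing k] [AddCommGroup V] [Module k V] [AddTorsor V P]

structure InGeneralPosition (S : Finset (AffineSubspace k P)) : Prop where
  direction_ne : ∀ ℓ₁ ∈ S, ∀ ℓ₂ ∈ S, ℓ₁ ≠ ℓ₂ → ℓ₁.direction ≠ ℓ₂.direction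
  card_le_two : ∀ x : P, ∀ T ⊆ S, (∀ ℓ ∈ T, x ∈ ℓ) → T.card ≤ 2

theorem inGeneralPosition_empty : InGeneralPosition (∅ : Finset (AffineSubspace k P)) :=
  ⟨by simp, fun _ T hT _ => by simp [subset_empty.mp hT]⟩

open Classical in
noncomputable def parallelClass (L : Finset (AffineSubspace k P)) (a : AffineSubspace k P) :
    Finset (AffineSubspace k P) :=
  L.filter (·.direction = a.direction)

open Classical in
noncomputable def throughMeet (L : Finset (AffineSubspace k P)) (a b : AffineSubspace k P) :
    Finset (AffineSubspace k P) :=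
  L.filter fun ℓ => ∃ x, x ∈ a ∧ x ∈ b ∧ x ∈ ℓ

theorem mem_parallelClass {L : Finset (AffineSubspace k P)} {a ℓ : AffineSubspace k P} :
    ℓ ∈ parallelClass L a ↔ ℓ ∈ L ∧ ℓ.direction = a.direction := by
  rw [parallelClass, mem_filter]

theorem mem_throughMeet {L : Finset (AffineSubspace k P)} {a b ℓ : AffineSubspace k P} :
    ℓ ∈ throughMeet L a b ↔ ℓ ∈ L ∧ ∃ x, x ∈ a ∧ x ∈ b ∧ x ∈ ℓ := by
  simp only [throughMeet, mem_filter]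

theorem card_parallelClass_lt {L : Finset (AffineSubspace k P)} {p : ℕ}
    (hpar : ∀ S ⊆ L, (∀ ℓ₁ ∈ S, ∀ ℓ₂ ∈ S, ℓ₁.direction = ℓ₂.direction) → S.card < p)
    (a : AffineSubspace k P) : (parallelClass L a).card < p :=
  hpar _ (fun _ h => (mem_parallelClass.mp h).1) fun _ h₁ _ h₂ =>
    (mem_parallelClass.mp h₁).2.trans (mem_parallelClass.mp h₂).2.symm

theorem card_throughMeet_le {L : Finset (AffineSubspace k P)} {q : ℕ}
    (hconc : ∀ x : P, ∀ S ⊆ L, (∀ ℓ ∈ S, x ∈ ℓ) → S.card < q) {a b : AffineSubspace k P}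
    (ha : finrank k a.direction = 1) (hb : finrank k b.direction = 1)
    (hab : a.direction ≠ b.direction) : (throughMeet L a b).card ≤ q := by
  rcases (throughMeet L a b).eq_empty_or_nonempty with h | ⟨ℓ₀, hℓ₀⟩
  · simp [h]
  obtain ⟨x, hxa, hxb, -⟩ := (mem_throughMeet.mp hℓ₀).2
  -- `a` and `b` meet only at `x`, so every line of `throughMeet L a b` passes through `x`.
  refine (hconc x _ (fun _ h => (mem_throughMeet.mp h).1) fun ℓ hℓ => ?_).le
  obtain ⟨y, hya, hyb, hyℓ⟩ := (mem_throughMeet.mp hℓ).2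
  rwa [AffineSubspace.eq_of_mem_of_mem_of_direction_ne ha hb hab hxa hxb hya hyb]

variable [DecidableEq (AffineSubspace k P)]

theorem exists_parallel_or_through_meet {S : Finset (AffineSubspace k P)}
    (hS : InGeneralPosition S) {ℓ : AffineSubspace k P}
    (hℓ : ¬ InGeneralPosition (insert ℓ S)) :
    (∃ a ∈ S, ℓ.direction = a.direction) ∨
      ∃ a ∈ S, ∃ b ∈ S, a ≠ b ∧ ∃ x, x ∈ a ∧ x ∈ b ∧ x ∈ ℓ := by
  by_contra! hcon
  obtain ⟨hpar, hmeet⟩ := hcon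
  refine hℓ ⟨fun a ha b hb hab => ?_, fun x T hT hTx => ?_⟩
  · rcases mem_insert.mp ha with rfl | ha <;> rcases mem_insert.mp hb with hbℓ | hb
    · exact absurd hbℓ.symm hab
    · exact hpar b hb
    · subst b
      exact fun h => hpar a ha h.symm
    · exact hS.direction_ne a ha b hb hab
  · have hT' : T.erase ℓ ⊆ S := fun m hm =>
      (mem_insert.mp (hT (mem_of_mem_erase hm))).resolve_left (ne_of_mem_erase hm)
    by_cases hℓT : ℓ ∈ T
    · by_contra! hcard
      obtain ⟨a, ha, b, hb, hab⟩ :=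
        one_lt_card.mp (show 1 < (T.erase ℓ).card by rw [card_erase_of_mem hℓT]; omega)
      exact hmeet a (hT' ha) b (hT' hb) hab x (hTx a (mem_of_mem_erase ha))
        (hTx b (mem_of_mem_erase hb)) (hTx ℓ hℓT)
    · rw [← erase_eq_of_notMem hℓT]
      exact hS.card_le_two x _ hT' (fun m hm => hTx m (mem_of_mem_erase hm))

theorem subset_union_of_maximal {L S : Finset (AffineSubspace k P)} (hS : InGeneralPosition S)
    (hmax : ∀ ℓ ∈ L, ℓ ∉ S → ¬ InGeneralPosition (insert ℓ S)) :
    L ⊆ S.biUnion (parallelClass L) ∪ S.offDiag.biUnion (fun ab => throughMeet L ab.1 ab.2) := by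
  intro ℓ hℓL
  by_cases hℓS : ℓ ∈ S
  · exact mem_union_left _ (mem_biUnion.mpr ⟨ℓ, hℓS, mem_parallelClass.mpr ⟨hℓL, rfl⟩⟩)
  rcases exists_parallel_or_through_meet hS (hmax ℓ hℓL hℓS) with
    ⟨a, ha, hpar⟩ | ⟨a, ha, b, hb, hab, hmeet⟩
  · exact mem_union_left _ (mem_biUnion.mpr ⟨a, ha, mem_parallelClass.mpr ⟨hℓL, hpar⟩⟩)
  · exact mem_union_right _
      (mem_biUnion.mpr ⟨(a, b), mem_offDiag.mpr ⟨ha, hb, hab⟩, mem_throughMeet.mpr ⟨hℓL, hmeet⟩⟩)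

theorem card_le_of_maximal {L S : Finset (AffineSubspace k P)} {p q : ℕ}
    (hline : ∀ ℓ ∈ L, finrank k ℓ.direction = 1)
    (hpar : ∀ S ⊆ L, (∀ ℓ₁ ∈ S, ∀ ℓ₂ ∈ S, ℓ₁.direction = ℓ₂.direction) → S.card < p)
    (hconc : ∀ x : P, ∀ S ⊆ L, (∀ ℓ ∈ S, x ∈ ℓ) → S.card < q)
    (hSL : S ⊆ L) (hS : InGeneralPosition S)
    (hmax : ∀ ℓ ∈ L, ℓ ∉ S → ¬ InGeneralPosition (insert ℓ S)) :
    L.card ≤ S.card ^ 2 * (p + q) := by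
  have hparallel : (S.biUnion (parallelClass L)).card ≤ S.card * p :=
    card_biUnion_le_card_mul _ _ p fun a _ => (card_parallelClass_lt hpar a).le
  have hmeet : (S.offDiag.biUnion fun ab => throughMeet L ab.1 ab.2).card ≤ S.card ^ 2 * q := by
    refine (card_biUnion_le_card_mul _ _ q fun ab hab => ?_).trans ?_
    · obtain ⟨ha, hb, hne⟩ := mem_offDiag.mp hab
      exact card_throughMeet_le hconc (hline _ (hSL ha)) (hline _ (hSL hb))
        (hS.direction_ne _ ha _ hb hne)
    · rw [offDiag_card, sq]
      exact Nat.mul_le_mul_right _ (Nat.sub_le _ _)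
  have hS_le : S.card ≤ S.card ^ 2 := Nat.le_self_pow two_ne_zero _
  calc L.card
      ≤ S.card * p + S.card ^ 2 * q :=
        (card_le_card (subset_union_of_maximal hS hmax)).trans <|
          (card_union_le _ _).trans (Nat.add_le_add hparallel hmeet)
    _ ≤ S.card ^ 2 * (p + q) := by nlinarith

end LineArrangement

open LineArrangement in
theorem stmt_3_general (p q : ℕ)
    (L : Finset (AffineSubspace ℝ (ℝ × ℝ)))
    (hline : ∀ ℓ ∈ L, Module.finrank ℝ ℓ.direction = 1 ∧ (ℓ : Set (ℝ × ℝ)).Nonempty)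
    (hpar : ∀ S ⊆ L,
      (∀ ℓ₁ ∈ S, ∀ ℓ₂ ∈ S, AffineSubspace.direction ℓ₁ = AffineSubspace.direction ℓ₂) →
      S.card < p)
    (hconc : ∀ x : ℝ × ℝ, ∀ S ⊆ L, (∀ ℓ ∈ S, x ∈ ℓ) → S.card < q) :
    ∃ S ⊆ L, Real.sqrt ((L.card : ℝ) / (p + q)) ≤ S.card ∧
      (∀ ℓ₁ ∈ S, ∀ ℓ₂ ∈ S, ℓ₁ ≠ ℓ₂ →
        AffineSubspace.direction ℓ₁ ≠ AffineSubspace.direction ℓ₂) ∧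
      (∀ x : ℝ × ℝ, ∀ T ⊆ S, (∀ ℓ ∈ T, x ∈ ℓ) → T.card ≤ 2) := by
  classical
  obtain ⟨S, hSL, hS, hmax⟩ := L.exists_subset_forall_not_insert _ inGeneralPosition_empty
  have hcard : (L.card : ℝ) ≤ S.card ^ 2 * (p + q) := by
    exact_mod_cast card_le_of_maximal (fun ℓ hℓ => (hline ℓ hℓ).1) hpar hconc hSL hS hmax
  refine ⟨S, hSL, ?_, hS.direction_ne, hS.card_le_two⟩
  rw [Real.sqrt_le_left (Nat.cast_nonneg _)]
  exact div_le_of_le_mul₀ (by positivity) (by positivity) hcard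

/-- If among `m` lines in `ℝ²` no `p` are mutually parallel and no `q` are concurrent
(`p, q ≥ 2`), then at least `√(m/(p+q))` of them are in general position
(no two parallel, no three concurrent). -/
theorem stmt_3 (p q : ℕ) (hp : 2 ≤ p) (hq : 2 ≤ q)
    (L : Finset (AffineSubspace ℝ (ℝ × ℝ)))
    (hline : ∀ ℓ ∈ L, Module.finrank ℝ ℓ.direction = 1 ∧ (ℓ : Set (ℝ × ℝ)).Nonempty)
    (hpar : ∀ S ⊆ L,
      (∀ ℓ₁ ∈ S, ∀ ℓ₂ ∈ S, AffineSubspace.direction ℓ₁ = AffineSubspace.direction ℓ₂) →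
      S.card < p)
    (hconc : ∀ x : ℝ × ℝ, ∀ S ⊆ L, (∀ ℓ ∈ S, x ∈ ℓ) → S.card < q) :
    ∃ S ⊆ L, Real.sqrt ((L.card : ℝ) / (p + q)) ≤ S.card ∧
      (∀ ℓ₁ ∈ S, ∀ ℓ₂ ∈ S, ℓ₁ ≠ ℓ₂ →
        AffineSubspace.direction ℓ₁ ≠ AffineSubspace.direction ℓ₂) ∧
      (∀ x : ℝ × ℝ, ∀ T ⊆ S, (∀ ℓ ∈ T, x ∈ ℓ) → T.card ≤ 2) :=
  stmt_3_general p q L hline hpar hconc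
end

section
/- Let f_1, ..., f_k ∈ ℝ[x] be polynomials, and suppose that for every pair (i,j) there exist polynomials p_{ij}, φ_i, φ_j with f_i = p_{ij} ∘ φ_i and f_j = p_{ij} ∘ φ_j, where every φ appearing is linear (degree exactly 1). Then there exists a single polynomial p ∈ ℝ[x] and linear polynomials ψ_1, ..., ψ_k such that f_i = p ∘ ψ_i for all i. -/
open Polynomial

/-
Linear polynomials are invertible under composition. Writing `f₀ = p₀ⱼ ∘ φ₀` and
`fⱼ = p₀ⱼ ∘ φⱼ`, one gets `fⱼ = f₀ ∘ (φ₀⁻¹ ∘ φⱼ)`, so `p = f₀` works for every `j`.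
-/

section Field

variable {K : Type*} [Field K]

noncomputable def linearInv (φ : K[X]) : K[X] :=
  C (φ.coeff 1)⁻¹ * (X - C (φ.coeff 0))

lemma coeff_one_ne_zero_of_degree_eq_one {φ : K[X]} (hφ : φ.degree = 1) : φ.coeff 1 ≠ 0 :=
  coeff_ne_zero_of_eq_degree hφ

lemma degree_linearInv {φ : K[X]} (hφ : φ.degree = 1) : (linearInv φ).degree = 1 := by
  rw [linearInv, degree_C_mul (inv_ne_zero (coeff_one_ne_zero_of_degree_eq_one hφ)),
    degree_X_sub_C]

lemma comp_linearInv {φ : K[X]} (hφ : φ.degree = 1) : φ.comp (linearInv φ) = X := by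
  nth_rewrite 1 [eq_X_add_C_of_degree_le_one hφ.le]
  rw [linearInv, add_comp, mul_comp, C_comp, X_comp, C_comp, ← mul_assoc, ← C_mul,
    mul_inv_cancel₀ (coeff_one_ne_zero_of_degree_eq_one hφ), C_1, one_mul, sub_add_cancel]

lemma degree_comp_eq_one {φ ψ : K[X]} (hφ : φ.degree = 1) (hψ : ψ.degree = 1) :
    (φ.comp ψ).degree = 1 := by
  rw [degree_comp (by rw [hψ]; exact zero_lt_one), hφ, hψ, one_mul]

lemma comp_comp_linearInv_comp (p : K[X]) {φ : K[X]} (hφ : φ.degree = 1) (ψ : K[X]) :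
    (p.comp φ).comp ((linearInv φ).comp ψ) = p.comp ψ := by
  rw [comp_assoc, ← comp_assoc φ, comp_linearInv hφ, X_comp]

end Field

/-- If every pair `(f_i, f_j)` admits a common outer polynomial `p_{ij}` with linear
inner polynomials, then all the `f_i` admit a single common outer polynomial `p`
with linear inner polynomials. -/
theorem stmt_5 (k : ℕ) (f : Fin k → Polynomial ℝ)
    (h : ∀ i j : Fin k, ∃ p φi φj : Polynomial ℝ,
      φi.degree = 1 ∧ φj.degree = 1 ∧ f i = p.comp φi ∧ f j = p.comp φj) :
    ∃ p : Polynomial ℝ, ∃ ψ : Fin k → Polynomial ℝ,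
      ∀ i : Fin k, (ψ i).degree = 1 ∧ f i = p.comp (ψ i) := by
  rcases isEmpty_or_nonempty (Fin k) with _ | ⟨⟨i₀⟩⟩
  · exact ⟨0, fun _ => X, isEmptyElim⟩
  choose p φ₀ φ hφ₀ hφ hf₀ hf using h i₀
  refine ⟨f i₀, fun j => (linearInv (φ₀ j)).comp (φ j), fun j => ⟨?_, ?_⟩⟩
  · exact degree_comp_eq_one (degree_linearInv (hφ₀ j)) (hφ j)
  · rw [hf₀ j, comp_comp_linearInv_comp _ (hφ₀ j), hf j]
end

section
/- If a differentiable function f: ℝ² → ℝ has the form f(x,y) = p(k(x) + l(y)) or f(x,y) = p(k(x)·l(y)) for differentiable functions p, k, l with p', k', l' nonvanishing, then the quantity q_f(x,y) = ∂²/∂x∂y [log( (∂f/∂x) / (∂f/∂y) )] is identically zero (wherever defined). -/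
open Filter Topology

lemma aux_inj (k : ℝ → ℝ) (hk : ContDiff ℝ (⊤ : ℕ∞) k) (hk' : ∀ t, deriv k t ≠ 0) :
    Function.Injective k := by
  have hc : Continuous k := hk.continuous
  intro a b hab
  by_contra hne
  rcases lt_or_gt_of_ne hne with h | h
  · obtain ⟨c, _, hc0⟩ := exists_deriv_eq_zero h (hc.continuousOn) hab
    exact hk' c hc0
  · obtain ⟨c, _, hc0⟩ := exists_deriv_eq_zero h (hc.continuousOn) hab.symm
    exact hk' c hc0

lemma aux_nd1 {g : ℝ → ℝ} {y C : ℝ} (h : ∀ᶠ z in 𝓝[≠] y, g z = C) (hC : g y ≠ C) :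
    ¬DifferentiableAt ℝ g y := by
  intro hd
  have h1 : Tendsto g (𝓝[≠] y) (𝓝 (g y)) :=
    (hd.continuousAt.tendsto).mono_left nhdsWithin_le_nhds
  have h2 : Tendsto g (𝓝[≠] y) (𝓝 C) :=
    Tendsto.congr' (h.mono fun z hz => hz.symm) tendsto_const_nhds
  exact hC (tendsto_nhds_unique h1 h2)

lemma aux_nd2 {g : ℝ → ℝ} {y : ℝ} (h : Tendsto g (𝓝[≠] y) atTop) :
    ¬DifferentiableAt ℝ g y := by
  intro hd
  have h1 : Tendsto g (𝓝[≠] y) (𝓝 (g y)) :=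
    (hd.continuousAt.tendsto).mono_left nhdsWithin_le_nhds
  exact not_tendsto_atTop_of_tendsto_nhds h1 h


/-- If `f(x,y) = p(k(x) + l(y))` or `f(x,y) = p(k(x)·l(y))` for smooth `p, k, l` with
nonvanishing derivatives, then `q_f = ∂²/∂x∂y [log(f_x / f_y)]` vanishes identically. -/
theorem stmt_7 (f : ℝ → ℝ → ℝ) (p k l : ℝ → ℝ)
    (hp : ContDiff ℝ (⊤ : ℕ∞) p) (hk : ContDiff ℝ (⊤ : ℕ∞) k) (hl : ContDiff ℝ (⊤ : ℕ∞) l)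
    (hp' : ∀ t, deriv p t ≠ 0) (hk' : ∀ t, deriv k t ≠ 0) (hl' : ∀ t, deriv l t ≠ 0)
    (hform : (∀ x y, f x y = p (k x + l y)) ∨ (∀ x y, f x y = p (k x * l y))) :
    ∀ x y : ℝ,
      deriv (fun y' => deriv (fun x' =>
        Real.log (deriv (fun a => f a y') x' / deriv (fun b => f x' b) y')) x) y = 0 := by
  rcases hform with hf | hf
  · have hpd : Differentiable ℝ p := hp.differentiable (by simp)
    have hkd : Differentiable ℝ k := hk.differentiable (by simp)
    have hld : Differentiable ℝ l := hl.differentiable (by simp)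
    have hk2 : Differentiable ℝ (deriv k) :=
      ((contDiff_infty_iff_deriv.mp (hk.of_le (by simp))).2).differentiable (by norm_num)
    intro x y
    -- compute the partial derivatives
    have hdx : ∀ x' y' : ℝ, deriv (fun a => f a y') x' =
        deriv p (k x' + l y') * deriv k x' := by
      intro x' y'
      have h1 : HasDerivAt (fun a => k a + l y') (deriv k x') x' :=
        (hkd x').hasDerivAt.add_const _
      have := ((hpd _).hasDerivAt.comp x' h1)
      have h2 : (fun a => f a y') = fun a => p (k a + l y') := funext fun a => hf a y'
      rw [h2]
      exact this.deriv
    have hdy : ∀ x' y' : ℝ, deriv (fun b => f x' b) y' =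
        deriv p (k x' + l y') * deriv l y' := by
      intro x' y'
      have h1 : HasDerivAt (fun b => k x' + l b) (deriv l y') y' :=
        (hld y').hasDerivAt.const_add _
      have := ((hpd _).hasDerivAt.comp y' h1)
      have h2 : (fun b => f x' b) = fun b => p (k x' + l b) := funext fun b => hf x' b
      rw [h2]
      exact this.deriv
    have key : (fun y' => deriv (fun x' =>
          Real.log (deriv (fun a => f a y') x' / deriv (fun b => f x' b) y')) x)
        = fun _ => deriv (deriv k) x / deriv k x := by
      funext y'
      have he : (fun x' => Real.log (deriv (fun a => f a y') x' / deriv (fun b => f x' b) y'))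
          = fun x' => Real.log (deriv k x' / deriv l y') := by
        funext x'
        rw [hdx x' y', hdy x' y', mul_div_mul_left _ _ (hp' _)]
      rw [he]
      have hF : HasDerivAt (fun x' => deriv k x' / deriv l y')
          (deriv (deriv k) x / deriv l y') x := (hk2 x).hasDerivAt.div_const _
      have hFx : deriv k x / deriv l y' ≠ 0 := div_ne_zero (hk' x) (hl' y')
      have := (hF.log hFx).deriv
      rw [this]
      field_simp [hl' y', hk' x]
    rw [key, deriv_const]
  · have hpd : Differentiable ℝ p := hp.differentiable (by simp)
    have hkd : Differentiable ℝ k := hk.differentiable (by simp)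
    have hld : Differentiable ℝ l := hl.differentiable (by simp)
    have hk2 : Differentiable ℝ (deriv k) :=
      ((contDiff_infty_iff_deriv.mp (hk.of_le (by simp))).2).differentiable (by norm_num)
    have hk2c : Continuous (deriv k) := (hk.of_le (by simp) |> contDiff_infty_iff_deriv.mp).2.continuous
    have hkinj : Function.Injective k := aux_inj k hk hk'
    have hlinj : Function.Injective l := aux_inj l hl hl'
    intro x y
    -- reduce to the simplified inner function
    have key : (fun y' => deriv (fun x' =>
          Real.log (deriv (fun a => f a y') x' / deriv (fun b => f x' b) y')) x)
        = fun y' => deriv (fun x' =>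
          Real.log ((deriv k x' * l y') / (k x' * deriv l y'))) x := by
      funext y'
      congr 1
      funext x'
      have hdx : deriv (fun a => f a y') x' = deriv p (k x' * l y') * (deriv k x' * l y') := by
        have h1 : HasDerivAt (fun a => k a * l y') (deriv k x' * l y') x' :=
          (hkd x').hasDerivAt.mul_const _
        have h2 : (fun a => f a y') = fun a => p (k a * l y') := funext fun a => hf a y'
        rw [h2]
        exact (((hpd _).hasDerivAt.comp x' h1)).deriv
      have hdy : deriv (fun b => f x' b) y' = deriv p (k x' * l y') * (k x' * deriv l y') := by
        have h1 : HasDerivAt (fun b => k x' * l b) (k x' * deriv l y') y' :=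
          (hld y').hasDerivAt.const_mul _
        have h2 : (fun b => f x' b) = fun b => p (k x' * l b) := funext fun b => hf x' b
        rw [h2]
        exact (((hpd _).hasDerivAt.comp y' h1)).deriv
      rw [hdx, hdy, mul_div_mul_left _ _ (hp' _)]
    rw [key]
    set g : ℝ → ℝ := fun y' => deriv (fun x' =>
        Real.log ((deriv k x' * l y') / (k x' * deriv l y'))) x with hg
    -- value of g when l y' = 0
    have hg0 : ∀ y', l y' = 0 → g y' = 0 := by
      intro y' h0
      have : (fun x' => Real.log ((deriv k x' * l y') / (k x' * deriv l y')))
          = fun _ => (0:ℝ) := by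
        funext x'; simp [h0]
      rw [hg]; simp only [this, deriv_const]
    by_cases hkx : k x = 0
    · -- degenerate x: g ≡ 0
      have hgz : g = fun _ => (0:ℝ) := by
        funext y'
        by_cases h0 : l y' = 0
        · exact hg0 y' h0
        · -- blow-up: not differentiable
          apply deriv_zero_of_not_differentiableAt
          apply aux_nd2
          -- |F| → atTop where F x' = (deriv k x' * l y') / (k x' * deriv l y')
          have hnum : Tendsto (fun x' => |deriv k x' * l y'|) (𝓝[≠] x) (𝓝 |deriv k x * l y'|) :=
            (((hk2c.continuousAt).mul continuousAt_const).abs.tendsto).mono_left nhdsWithin_le_nhds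
          have hnumpos : 0 < |deriv k x * l y'| := abs_pos.mpr (mul_ne_zero (hk' x) h0)
          have hden : Tendsto (fun x' => |k x' * deriv l y'|) (𝓝[≠] x) (𝓝[>] 0) := by
            apply tendsto_nhdsWithin_of_tendsto_nhds_of_eventually_within
            · have : Tendsto (fun x' => |k x' * deriv l y'|) (𝓝 x) (𝓝 |k x * deriv l y'|) :=
                ((hk.continuous.continuousAt.mul continuousAt_const).abs.tendsto)
              simpa [hkx] using this.mono_left nhdsWithin_le_nhds
            · filter_upwards [self_mem_nhdsWithin] with z (hz : z ≠ x)
              have : k z ≠ 0 := fun h => hz (hkinj (h.trans hkx.symm))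
              exact abs_pos.mpr (mul_ne_zero this (hl' y'))
          have habs : Tendsto (fun x' => |deriv k x' * l y'| * |k x' * deriv l y'|⁻¹)
              (𝓝[≠] x) atTop :=
            Tendsto.pos_mul_atTop hnumpos hnum hden.inv_tendsto_nhdsGT_zero
          have hlog := Real.tendsto_log_atTop.comp habs
          refine hlog.congr fun z => ?_
          simp only [Function.comp]
          rw [← abs_inv, ← abs_mul, Real.log_abs, div_eq_mul_inv]
      rw [hgz, deriv_const]
    · -- k x ≠ 0
      set C : ℝ := deriv (deriv k) x / deriv k x - deriv k x / k x with hC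
      have hgC : ∀ y', l y' ≠ 0 → g y' = C := by
        intro y' h0
        have hN : HasDerivAt (fun x' => deriv k x' * l y') (deriv (deriv k) x * l y') x :=
          (hk2 x).hasDerivAt.mul_const _
        have hD : HasDerivAt (fun x' => k x' * deriv l y') (deriv k x * deriv l y') x :=
          (hkd x).hasDerivAt.mul_const _
        have hDx : k x * deriv l y' ≠ 0 := mul_ne_zero hkx (hl' y')
        have hF : HasDerivAt (fun x' => deriv k x' * l y' / (k x' * deriv l y')) _ x :=
          hN.div hD hDx
        have hFx : (deriv k x * l y') / (k x * deriv l y') ≠ 0 :=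
          div_ne_zero (mul_ne_zero (hk' x) h0) hDx
        have := (hF.log hFx).deriv
        show deriv (fun x' => Real.log (deriv k x' * l y' / (k x' * deriv l y'))) x = C
        rw [this, hC]
        field_simp [hkx, h0, hl' y', hk' x]
      by_cases hly : l y = 0
      · by_cases hCz : C = 0
        · have hgz : g = fun _ => (0:ℝ) := by
            funext y'
            by_cases h0 : l y' = 0
            · exact hg0 y' h0
            · rw [hgC y' h0, hCz]
          rw [hgz, deriv_const]
        · apply deriv_zero_of_not_differentiableAt
          apply aux_nd1 (C := C)
          · filter_upwards [self_mem_nhdsWithin] with z (hz : z ≠ y)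
            have : l z ≠ 0 := fun h => hz (hlinj (h.trans hly.symm))
            exact hgC z this
          · rw [hg0 y hly]; exact fun h => hCz h.symm
      · have hev : g =ᶠ[𝓝 y] fun _ => C := by
          filter_upwards [(hl.continuous.continuousAt.eventually_ne hly)] with z hz
          exact hgC z hz
        rw [hev.deriv_eq, deriv_const]
end

section
/- The polynomial f(x,y,z) = x + (y−z)² cannot be written in the form P(K(x)·L(y)·M(z)) for nonconstant polynomials P, K, L, M ∈ ℝ[t]. -/
/-!
On the diagonal `y = z` the polynomial becomes `x`. Fixing `x = x₀` with `K(x₀) = c ≠ 0` gives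
`P(c · L(t) · M(t)) = x₀` for all real `t`, so the composite `P ∘ (c · L · M)` is constant,
although its degree is `deg P · (deg L + deg M) > 0`.
-/

open MvPolynomial

theorem MvPolynomial.aeval_aeval_X {R S σ : Type*} [CommSemiring R] [CommSemiring S]
    [Algebra R S] (v : σ → S) (i : σ) (p : Polynomial R) :
    aeval v (Polynomial.aeval (X i : MvPolynomial σ R) p) = Polynomial.aeval (v i) p := by
  rw [← Polynomial.aeval_algHom_apply, aeval_X]

theorem Polynomial.comp_ne_C_of_natDegree_pos {R : Type*} [Semiring R] [NoZeroDivisors R]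
    {p q : Polynomial R} (hp : 0 < p.natDegree) (hq : 0 < q.natDegree) (a : R) :
    p.comp q ≠ C a := fun h => by
  have := congrArg natDegree h
  rw [natDegree_comp, natDegree_C] at this
  exact (Nat.mul_pos hp hq).ne' this

/-- The polynomial `f(x,y,z) = x + (y - z)²` cannot be written as
`P(K(x)·L(y)·M(z))` with `P, K, L, M` nonconstant univariate real polynomials. -/
theorem stmt_9 :
    ¬ ∃ P K L M : Polynomial ℝ,
      0 < P.natDegree ∧ 0 < K.natDegree ∧ 0 < L.natDegree ∧ 0 < M.natDegree ∧
      (X 0 + (X 1 - X 2) ^ 2 : MvPolynomial (Fin 3) ℝ) =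
        Polynomial.aeval
          ((Polynomial.aeval (X 0 : MvPolynomial (Fin 3) ℝ) K) *
           (Polynomial.aeval (X 1 : MvPolynomial (Fin 3) ℝ) L) *
           (Polynomial.aeval (X 2 : MvPolynomial (Fin 3) ℝ) M)) P := by
  rintro ⟨P, K, L, M, hP, hK, hL, hM, h⟩
  obtain ⟨x₀, hx₀⟩ : ∃ x₀, K.eval x₀ ≠ 0 := by
    by_contra! hK0
    simp [Polynomial.zero_of_eval_zero K hK0] at hK
  set Q := Polynomial.C (K.eval x₀) * (L * M)
  have hQ : 0 < Q.natDegree := by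
    rw [Polynomial.natDegree_C_mul hx₀, Polynomial.natDegree_mul (by rintro rfl; simp at hL)
      (by rintro rfl; simp at hM)]
    omega
  have on_diagonal : ∀ t : ℝ, (P.comp Q).eval t = (Polynomial.C x₀).eval t := by
    intro t
    have := congrArg (aeval ![x₀, t, t]) h
    rw [← Polynomial.aeval_algHom_apply] at this
    simp only [map_add, map_pow, map_sub, map_mul, aeval_X, aeval_aeval_X,
      Polynomial.coe_aeval_eq_eval, Matrix.cons_val, sub_self] at this
    simpa [Q, Polynomial.eval_comp, ← mul_assoc] using this.symm
  exact Polynomial.comp_ne_C_of_natDegree_pos hP hQ x₀ (Polynomial.funext on_diagonal)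
end

section
/- The polynomial f(x,y,z) = x + (y−z)² cannot be written in the form p(k(x) + l(y) + m(z)) for nonconstant polynomials p, k, l, m ∈ ℝ[t]. -/
/-!
Setting `y = z = 0` gives `p (k x + c) = x`, so `p` has degree one. An affine `p` turns
`p (k 0 + l y + m z)` into a sum of a function of `y` and a function of `z`, whose values at the
corners of the unit square satisfy `g 1 1 + g 0 0 = g 1 0 + g 0 1`; but `(y - z)²` gives `0 + 0`
on the left and `1 + 1` on the right.
-/

open MvPolynomial

namespace Polynomial

theorem natDegree_eq_one_of_comp_eq_X {R : Type*} [CommRing R] [NoZeroDivisors R] [Nontrivial R]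
    {p q : R[X]} (h : p.comp q = X) : p.natDegree = 1 := by
  have hdeg := congrArg natDegree h
  rw [natDegree_comp, natDegree_X] at hdeg
  exact Nat.eq_one_of_mul_eq_one_right hdeg

theorem eval_add_add_eval_add_of_natDegree_le_one {R : Type*} [CommRing R] {p : R[X]}
    (hp : p.natDegree ≤ 1) (a a' b b' : R) :
    p.eval (a + b) + p.eval (a' + b') = p.eval (a + b') + p.eval (a' + b) := by
  rw [eq_X_add_C_of_natDegree_le_one hp]
  simp only [eval_add, eval_mul, eval_C, eval_X]
  ring

end Polynomial

theorem MvPolynomial.eval_polynomial_aeval {σ R : Type*} [CommSemiring R] (v : σ → R)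
    (x : MvPolynomial σ R) (q : Polynomial R) :
    eval v (Polynomial.aeval x q) = q.eval (eval v x) :=
  (Polynomial.aeval_algHom_apply (aeval v) x q).symm

/-- The polynomial `f(x,y,z) = x + (y - z)²` cannot be written as
`p(k(x) + l(y) + m(z))` with `p, k, l, m` nonconstant univariate real polynomials. -/
theorem stmt_10 :
    ¬ ∃ p k l m : Polynomial ℝ,
      0 < p.natDegree ∧ 0 < k.natDegree ∧ 0 < l.natDegree ∧ 0 < m.natDegree ∧
      (X 0 + (X 1 - X 2) ^ 2 : MvPolynomial (Fin 3) ℝ) =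
        Polynomial.aeval
          ((Polynomial.aeval (X 0 : MvPolynomial (Fin 3) ℝ) k) +
           (Polynomial.aeval (X 1 : MvPolynomial (Fin 3) ℝ) l) +
           (Polynomial.aeval (X 2 : MvPolynomial (Fin 3) ℝ) m)) p := by
  rintro ⟨p, k, l, m, -, -, -, -, heq⟩
  have hpoint (a b c : ℝ) : a + (b - c) ^ 2 = p.eval (k.eval a + l.eval b + m.eval c) := by
    simpa [eval_polynomial_aeval] using congrArg (eval ![a, b, c]) heq
  have hcomp : p.comp (k + Polynomial.C (l.eval 0 + m.eval 0)) = Polynomial.X :=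
    Polynomial.funext fun a => by simpa [add_assoc] using (hpoint a 0 0).symm
  have hrect := Polynomial.eval_add_add_eval_add_of_natDegree_le_one
    (Polynomial.natDegree_eq_one_of_comp_eq_X hcomp).le
    (k.eval 0 + l.eval 1) (k.eval 0 + l.eval 0) (m.eval 1) (m.eval 0)
  rw [← hpoint, ← hpoint, ← hpoint, ← hpoint] at hrect
  norm_num at hrect
end

section
/- Let k be an even positive integer, n = k², A = D = {1, ..., k²} and B = C = {1, ..., k}. Then the number of quadruples (x,y,z,w) ∈ A × B × C × D with w = x + (y−z)² is at least k⁴/8 = n²/8. -/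
/-!
Projecting the graph of `f(x, y, z) = x + (y - z)²` onto its first three coordinates is a
bijection onto the triples with `f(x, y, z) ∈ D`. Writing `k = 2m`, every triple with
`x ≤ 2m²` and `y, z ≤ m` qualifies, since then `(y - z)² ≤ (m - 1)²` and
`x + (y - z)² ≤ 4m² = k²`. These `2m⁴ = k⁴/8` triples give the bound.
-/

open Finset

theorem card_filter_graph {α β γ δ : Type*} [DecidableEq δ] (A : Finset α) (B : Finset β)
    (C : Finset γ) (D : Finset δ) (f : α → β → γ → δ) :
    ((A ×ˢ B ×ˢ C ×ˢ D).filter fun t => t.2.2.2 = f t.1 t.2.1 t.2.2.1).card =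
      ((A ×ˢ B ×ˢ C).filter fun t => f t.1 t.2.1 t.2.2 ∈ D).card := by
  refine card_nbij' (fun t => (t.1, t.2.1, t.2.2.1))
    (fun t => (t.1, t.2.1, t.2.2, f t.1 t.2.1 t.2.2)) ?_ ?_ ?_ ?_
  · rintro ⟨x, y, z, w⟩ h
    simp only [mem_coe, mem_filter, mem_product] at h ⊢
    obtain ⟨⟨hx, hy, hz, hw⟩, rfl⟩ := h
    exact ⟨⟨hx, hy, hz⟩, hw⟩
  · rintro ⟨x, y, z⟩ h
    simp only [mem_coe, mem_filter, mem_product] at h ⊢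
    tauto
  · rintro ⟨x, y, z, w⟩ h
    simp only [mem_coe, mem_filter, mem_product] at h
    rw [h.2]
  · rintro ⟨x, y, z⟩ -
    rfl

theorem sq_sub_le_of_mem_Icc {m y z : ℤ} (hy : y ∈ Icc 1 m) (hz : z ∈ Icc 1 m) :
    (y - z) ^ 2 ≤ (m - 1) ^ 2 := by
  rw [mem_Icc] at hy hz
  nlinarith

theorem box_subset_filter_sq_sub (m : ℤ) :
    Icc 1 (2 * m ^ 2) ×ˢ Icc 1 m ×ˢ Icc 1 m ⊆
      (Icc 1 ((2 * m) ^ 2) ×ˢ Icc 1 (2 * m) ×ˢ Icc 1 (2 * m)).filter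
        fun t => t.1 + (t.2.1 - t.2.2) ^ 2 ∈ Icc 1 ((2 * m) ^ 2) := by
  rintro ⟨x, y, z⟩ hxyz
  simp only [mem_product] at hxyz
  obtain ⟨hx, hy, hz⟩ := hxyz
  have hsq := sq_sub_le_of_mem_Icc hy hz
  rw [mem_Icc] at hx hy hz
  simp only [mem_filter, mem_product, mem_Icc]
  refine ⟨⟨⟨hx.1, by nlinarith⟩, ⟨hy.1, by omega⟩, hz.1, by omega⟩, ?_, ?_⟩ <;>
    nlinarith [sq_nonneg (y - z)]

theorem card_box (m : ℕ) :
    (Icc (1 : ℤ) (2 * (m : ℤ) ^ 2) ×ˢ Icc (1 : ℤ) m ×ˢ Icc (1 : ℤ) m).card = 2 * m ^ 4 := by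
  simp only [card_product, Int.card_Icc, add_sub_cancel_right, Int.toNat_natCast]
  rw [show (2 * (m : ℤ) ^ 2) = ((2 * m ^ 2 : ℕ) : ℤ) by push_cast; ring, Int.toNat_natCast]
  ring

theorem stmt_11_general (k : ℕ) (hke : Even k) :
    (k : ℝ) ^ 4 / 8 ≤
      (((Finset.Icc (1 : ℤ) ((k : ℤ) ^ 2) ×ˢ Finset.Icc (1 : ℤ) (k : ℤ) ×ˢ
          Finset.Icc (1 : ℤ) (k : ℤ) ×ˢ Finset.Icc (1 : ℤ) ((k : ℤ) ^ 2)).filter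
        fun t => t.2.2.2 = t.1 + (t.2.1 - t.2.2.1) ^ 2).card : ℝ) := by
  obtain ⟨m, rfl⟩ := hke
  have hk : ((m + m : ℕ) : ℤ) = 2 * m := by push_cast; ring
  rw [card_filter_graph _ _ _ _ fun x y z => x + (y - z) ^ 2, hk]
  have hbound := card_le_card (box_subset_filter_sq_sub m)
  rw [card_box] at hbound
  calc ((m + m : ℕ) : ℝ) ^ 4 / 8 = ((2 * m ^ 4 : ℕ) : ℝ) := by push_cast; ring
    _ ≤ _ := by exact_mod_cast hbound

/-- For an even positive integer `k`, with `A = D = [1, k²]` and `B = C = [1, k]`,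
the graph `w = x + (y - z)²` contains at least `k⁴/8 = n²/8` points (with `n = k²`)
of `A × B × C × D`. -/
theorem stmt_11 (k : ℕ) (hk : 0 < k) (hke : Even k) :
    (k : ℝ) ^ 4 / 8 ≤
      (((Finset.Icc (1 : ℤ) ((k : ℤ) ^ 2) ×ˢ Finset.Icc (1 : ℤ) (k : ℤ) ×ˢ
          Finset.Icc (1 : ℤ) (k : ℤ) ×ˢ Finset.Icc (1 : ℤ) ((k : ℤ) ^ 2)).filter
        fun t => t.2.2.2 = t.1 + (t.2.1 - t.2.2.1) ^ 2).card : ℝ) :=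
  stmt_11_general k hke
end

section
/- Let K be a field and f ∈ K[x] of degree d ≥ 1. Call two decompositions f = φ_1 ∘ ψ_1 = φ_2 ∘ ψ_2 (with φ_i, ψ_i ∈ K[x]) equivalent if ψ_1 = aψ_2 + b for some a, b ∈ K with a ≠ 0. Then f has at most 2^d pairwise non-equivalent decompositions. -/
/-!
Normalise the inner polynomial of a decomposition `f = φ ∘ ψ` affinely to
`ψ̂ = (ψ - ψ(0)) / lc(ψ)`, which is monic, vanishes at `0`, and determines `ψ` up to
equivalence. Since `ψ - ψ(0)` divides `φ(ψ) - φ(ψ(0)) = f - f(0)`, the `ψ̂` are distinct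
monic divisors of `f - f(0)`, a nonzero polynomial of degree `d`. Over an algebraic
closure a monic divisor is determined by its multiset of roots, a submultiset of the
`≤ d` roots of `f - f(0)`, so there are at most `2^d` of them.
-/

open Polynomial

namespace Polynomial

theorem sub_C_eval_zero_dvd_comp_sub_C {R : Type*} [CommRing R] (φ ψ : R[X]) :
    ψ - C (ψ.eval 0) ∣ φ.comp ψ - C ((φ.comp ψ).eval 0) := by
  have h := sub_dvd_eval_sub ψ (C (ψ.eval 0)) (φ.map C)
  rwa [eval_map, eval_map, ← comp, ← comp, comp_C, ← eval_comp] at h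

section Field

variable {K : Type*} [Field K]

theorem card_le_two_pow_of_monic_dvd {g : K[X]} (hg : g ≠ 0) (T : Finset K[X])
    (hT : ∀ p ∈ T, p.Monic ∧ p ∣ g) : T.card ≤ 2 ^ g.natDegree := by
  classical
  let ι := algebraMap K (AlgebraicClosure K)
  let rootsOf : K[X] → Multiset (AlgebraicClosure K) := fun p => (p.map ι).roots
  have hmaps : Set.MapsTo rootsOf T (g.map ι).roots.powerset.toFinset := by
    intro p hp
    rw [Finset.mem_coe, Multiset.mem_toFinset, Multiset.mem_powerset]
    exact roots.le_of_dvd (map_ne_zero hg) (Polynomial.map_dvd ι (hT p hp).2)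
  have hinj : Set.InjOn rootsOf T := by
    intro p hp q hq hpq
    apply map_injective ι ι.injective
    rw [(IsAlgClosed.splits _).eq_prod_roots_of_monic ((hT p hp).1.map ι),
      (IsAlgClosed.splits _).eq_prod_roots_of_monic ((hT q hq).1.map ι)]
    exact congrArg (fun m => (m.map fun a => X - C a).prod) hpq
  calc T.card ≤ (g.map ι).roots.powerset.toFinset.card :=
        Finset.card_le_card_of_injOn rootsOf hmaps hinj
    _ ≤ 2 ^ (g.map ι).roots.card := by
        rw [← Multiset.card_powerset]
        exact Multiset.toFinset_card_le _
    _ ≤ 2 ^ g.natDegree := by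
        gcongr
        · norm_num
        · exact (card_roots' _).trans natDegree_map_le

/-- The representative of `ψ` modulo affine changes `ψ ↦ a ψ + b`: monic (for
nonconstant `ψ`) with zero constant term. -/
noncomputable def affineNormalize (ψ : K[X]) : K[X] :=
  C ψ.leadingCoeff⁻¹ * (ψ - C (ψ.eval 0))

theorem monic_affineNormalize {ψ : K[X]} (hψ : 0 < ψ.natDegree) :
    (affineNormalize ψ).Monic := by
  have hlc : (ψ - C (ψ.eval 0)).leadingCoeff = ψ.leadingCoeff :=
    leadingCoeff_sub_of_degree_lt (degree_C_le.trans_lt (natDegree_pos_iff_degree_pos.mp hψ))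
  rw [Monic, affineNormalize, leadingCoeff_mul, leadingCoeff_C, hlc,
    inv_mul_cancel₀ (leadingCoeff_ne_zero.mpr (ne_zero_of_natDegree_gt hψ))]

theorem eq_C_mul_affineNormalize_add_C {ψ : K[X]} (hψ : ψ ≠ 0) :
    ψ = C ψ.leadingCoeff * affineNormalize ψ + C (ψ.eval 0) := by
  rw [affineNormalize, ← mul_assoc, ← C_mul, mul_inv_cancel₀ (leadingCoeff_ne_zero.mpr hψ),
    C_1, one_mul, sub_add_cancel]

theorem exists_affine_eq_of_affineNormalize_eq {ψ ψ' : K[X]} (hψ : ψ ≠ 0) (hψ' : ψ' ≠ 0)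
    (h : affineNormalize ψ = affineNormalize ψ') :
    ∃ a b : K, a ≠ 0 ∧ ψ = C a * ψ' + C b := by
  refine ⟨ψ.leadingCoeff * ψ'.leadingCoeff⁻¹,
    ψ.eval 0 - ψ.leadingCoeff * ψ'.leadingCoeff⁻¹ * ψ'.eval 0,
    mul_ne_zero (leadingCoeff_ne_zero.mpr hψ) (inv_ne_zero (leadingCoeff_ne_zero.mpr hψ')), ?_⟩
  refine (eq_C_mul_affineNormalize_add_C hψ).trans ?_
  rw [h, affineNormalize]
  simp only [C_mul, C_sub]
  ring

theorem affineNormalize_dvd_comp_sub_C (φ : K[X]) {ψ : K[X]}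
    (hψ : ψ ≠ 0) : affineNormalize ψ ∣ φ.comp ψ - C ((φ.comp ψ).eval 0) :=
  (C_mul_dvd (inv_ne_zero (leadingCoeff_ne_zero.mpr hψ))).mpr
    (sub_C_eval_zero_dvd_comp_sub_C φ ψ)

end Field

end Polynomial

/-- A polynomial of degree `d ≥ 1` over a field has at most `2^d` pairwise
non-equivalent decompositions `f = φ ∘ ψ`, where two decompositions are equivalent
if their inner polynomials differ by an invertible affine change `ψ₁ = a·ψ₂ + b`. -/
theorem stmt_13 {K : Type*} [Field K] (f : Polynomial K) (d : ℕ)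
    (hd : f.natDegree = d) (hd1 : 1 ≤ d)
    (S : Finset (Polynomial K × Polynomial K))
    (hdec : ∀ s ∈ S, f = s.1.comp s.2)
    (hne : ∀ s ∈ S, ∀ s' ∈ S, s ≠ s' →
      ¬ ∃ a b : K, a ≠ 0 ∧ s.2 = Polynomial.C a * s'.2 + Polynomial.C b) :
    S.card ≤ 2 ^ d := by
  classical
  have hinner : ∀ s ∈ S, 0 < s.2.natDegree := fun s hs => by
    have := hd ▸ congrArg natDegree (hdec s hs)
    rw [natDegree_comp] at this
    exact Nat.pos_of_mul_pos_left (this ▸ hd1)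
  have hg : (f - C (f.eval 0)).natDegree = d := by rw [natDegree_sub_C, hd]
  have hg0 : f - C (f.eval 0) ≠ 0 := ne_zero_of_natDegree_gt (hg ▸ hd1)
  have hinj : Set.InjOn (fun s : K[X] × K[X] => affineNormalize s.2) S := by
    intro s hs s' hs' h
    by_contra hss
    exact hne s hs s' hs' hss <| exists_affine_eq_of_affineNormalize_eq
      (ne_zero_of_natDegree_gt (hinner s hs)) (ne_zero_of_natDegree_gt (hinner s' hs')) h
  calc S.card = (S.image fun s => affineNormalize s.2).card :=
        (Finset.card_image_of_injOn hinj).symm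
    _ ≤ 2 ^ d := by
      refine hg ▸ card_le_two_pow_of_monic_dvd hg0 _ ?_
      simp only [Finset.mem_image, forall_exists_index, and_imp]
      rintro _ s hs rfl
      exact ⟨monic_affineNormalize (hinner s hs), hdec s hs ▸
        affineNormalize_dvd_comp_sub_C _ (ne_zero_of_natDegree_gt (hinner s hs))⟩
end

section
/- For every c > 0 and positive integer k there exists a constant C = C(c,k) > 0 such that: if a finite graph on N vertices has at least cN² edges and its edges are colored so that at each vertex at most k distinct colors appear among its incident edges, then some color class contains at least CN² edges. -/
/-!
Let `sₘ` be the number of edges of colour `m` and `tₘ` the number of vertices incident to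
such an edge. Then `sₘ ≤ tₘ²`, and counting (vertex, colour) incidences gives `∑ tₘ ≤ kN`.
If `M` is the largest colour class, `sₘ = √sₘ · √sₘ ≤ √M · tₘ`, so
`cN² ≤ ∑ sₘ ≤ √M · kN`, i.e. `M ≥ (c/k)² N²`.
-/

open Finset

theorem Finset.sum_le_sqrt_mul_sum {ι : Type*} (T : Finset ι) {s t : ι → ℝ} {M : ℝ}
    (hs : ∀ i ∈ T, 0 ≤ s i) (ht : ∀ i ∈ T, 0 ≤ t i) (hst : ∀ i ∈ T, s i ≤ t i ^ 2)
    (hM : ∀ i ∈ T, s i ≤ M) :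
    ∑ i ∈ T, s i ≤ √M * ∑ i ∈ T, t i := by
  rw [mul_sum]
  refine sum_le_sum fun i hi => ?_
  calc s i = √(s i) * √(s i) := (Real.mul_self_sqrt (hs i hi)).symm
    _ ≤ √M * t i :=
      mul_le_mul (Real.sqrt_le_sqrt (hM i hi)) ((Real.sqrt_le_left (ht i hi)).2 (hst i hi))
        (Real.sqrt_nonneg _) (Real.sqrt_nonneg _)

namespace SimpleGraph

variable {V α : Type*} [Fintype V] [DecidableEq α]
  (G : SimpleGraph V) [DecidableRel G.Adj] (col : Sym2 V → α)

def colorClass (m : α) : Finset (Sym2 V) :=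
  G.edgeFinset.filter fun e => col e = m

def colorSupport (m : α) : Finset V :=
  univ.filter fun v => ∃ w, G.Adj v w ∧ col s(v, w) = m

theorem colorClass_subset_sym2_colorSupport (m : α) :
    G.colorClass col m ⊆ (G.colorSupport col m).sym2 := by
  intro e he
  induction e with
  | _ v w =>
    simp only [colorClass, mem_filter, mem_edgeFinset, mem_edgeSet] at he
    obtain ⟨hvw, hm⟩ := he
    simp only [mk_mem_sym2_iff, colorSupport, mem_filter, mem_univ, true_and]
    exact ⟨⟨w, hvw, hm⟩, ⟨v, hvw.symm, Sym2.eq_swap ▸ hm⟩⟩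

theorem card_colorClass_le_sq (m : α) :
    #(G.colorClass col m) ≤ #(G.colorSupport col m) ^ 2 := by
  set t := #(G.colorSupport col m)
  calc #(G.colorClass col m) ≤ #(G.colorSupport col m).sym2 :=
        card_le_card (G.colorClass_subset_sym2_colorSupport col m)
    _ = (t + 1).choose 2 := card_sym2 _
    _ ≤ t ^ 2 := by
        rw [Nat.choose_two_right, Nat.add_sub_cancel]
        exact Nat.div_le_of_le_mul (by nlinarith)

theorem sum_card_colorSupport_le {k : ℕ}
    (hcol : ∀ v, #((G.neighborFinset v).image fun w => col s(v, w)) ≤ k) (T : Finset α) :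
    ∑ m ∈ T, #(G.colorSupport col m) ≤ k * Fintype.card V := by
  have hv : ∀ v, #(T.filter fun m => ∃ w, G.Adj v w ∧ col s(v, w) = m) ≤ k := by
    refine fun v => (card_le_card fun m hm => ?_).trans (hcol v)
    obtain ⟨-, w, hvw, rfl⟩ := mem_filter.1 hm
    exact mem_image_of_mem _ ((G.mem_neighborFinset v w).2 hvw)
  calc ∑ m ∈ T, #(G.colorSupport col m)
      = ∑ v, #(T.filter fun m => ∃ w, G.Adj v w ∧ col s(v, w) = m) := by
        simp only [colorSupport, card_filter]
        exact sum_comm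
    _ ≤ ∑ _v : V, k := sum_le_sum fun v _ => hv v
    _ = k * Fintype.card V := by rw [sum_const, smul_eq_mul, card_univ, mul_comm]

theorem exists_card_edgeFinset_le_sqrt_card_colorClass_mul {k : ℕ}
    (hcol : ∀ v, #((G.neighborFinset v).image fun w => col s(v, w)) ≤ k)
    (hne : G.edgeFinset.Nonempty) :
    ∃ m, (#G.edgeFinset : ℝ) ≤ √(#(G.colorClass col m) : ℝ) * (k * Fintype.card V) := by
  set T := G.edgeFinset.image col
  obtain ⟨m, -, hmax⟩ := T.exists_max_image (fun m => #(G.colorClass col m)) (hne.image col)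
  refine ⟨m, ?_⟩
  have hpartition : #G.edgeFinset = ∑ m ∈ T, #(G.colorClass col m) :=
    card_eq_sum_card_fiberwise fun e he => mem_image_of_mem col he
  have hsupport : (∑ m ∈ T, #(G.colorSupport col m) : ℝ) ≤ k * Fintype.card V := by
    exact_mod_cast G.sum_card_colorSupport_le col hcol T
  calc (#G.edgeFinset : ℝ) = ∑ m ∈ T, (#(G.colorClass col m) : ℝ) := by
        exact_mod_cast hpartition
    _ ≤ √(#(G.colorClass col m) : ℝ) * ∑ m ∈ T, (#(G.colorSupport col m) : ℝ) :=
        T.sum_le_sqrt_mul_sum (fun _ _ => Nat.cast_nonneg _) (fun _ _ => Nat.cast_nonneg _)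
          (fun i _ => by exact_mod_cast G.card_colorClass_le_sq col i)
          (fun i hi => by exact_mod_cast hmax i hi)
    _ ≤ √(#(G.colorClass col m) : ℝ) * (k * Fintype.card V) :=
        mul_le_mul_of_nonneg_left hsupport (Real.sqrt_nonneg _)

end SimpleGraph

/-- Graph Lemma: for every `c > 0` and `k` there is `C > 0` such that any graph on `N`
vertices with at least `cN²` edges, whose edges are colored with at most `k` colors
meeting at each vertex, has a monochromatic subgraph with at least `CN²` edges. -/
theorem stmt_15 (c : ℝ) (hc : 0 < c) (k : ℕ) (hk : 0 < k) :
    ∃ C : ℝ, 0 < C ∧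
      ∀ (V : Type) [Fintype V] [DecidableEq V] (G : SimpleGraph V)
        [DecidableRel G.Adj] (col : Sym2 V → ℕ),
        c * (Fintype.card V : ℝ) ^ 2 ≤ (G.edgeFinset.card : ℝ) →
        (∀ v : V, ((G.neighborFinset v).image fun w => col s(v, w)).card ≤ k) →
        ∃ m : ℕ, C * (Fintype.card V : ℝ) ^ 2 ≤
          ((G.edgeFinset.filter fun e => col e = m).card : ℝ) := by
  refine ⟨(c / k) ^ 2, by positivity, fun V _ _ G _ col hE hcol => ?_⟩
  set N := Fintype.card V
  obtain hN | hN := Nat.eq_zero_or_pos N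
  · exact ⟨0, by simp [hN]⟩
  have hNk : (0 : ℝ) < k * N := by positivity
  have hne : G.edgeFinset.Nonempty := by
    rw [← card_pos, ← Nat.cast_pos (α := ℝ)]
    exact lt_of_lt_of_le (by positivity) hE
  obtain ⟨m, hm⟩ := G.exists_card_edgeFinset_le_sqrt_card_colorClass_mul col hcol hne
  have hsqrt : c / k * N ≤ √(#(G.colorClass col m) : ℝ) := by
    rw [← mul_le_mul_iff_of_pos_right hNk]
    calc c / k * N * (k * N) = c * N ^ 2 := by field_simp
      _ ≤ _ := hE.trans hm
  refine ⟨m, ?_⟩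
  calc (c / k) ^ 2 * (N : ℝ) ^ 2 = (c / k * N) ^ 2 := by ring
    _ ≤ (#(G.colorClass col m) : ℝ) := (Real.le_sqrt (by positivity) (by positivity)).1 hsqrt
end

section
/- Let P, K, L, M and P*, K*, R* be differentiable functions with f(x,y,z) = P(K(x)·R(y,z)) and f(x,y,z) = P*(K*(y)·R*(x,z)), where all derivatives involved are nonvanishing on an open set. Then on that set R(y,z) factors as R(y,z) = L(y)·M(z) for some functions L, M. -/
open Set

/-- If `f(x,y,z) = P(K(x)·R(y,z)) = P*(K*(y)·R*(x,z))` on an open box, with all the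
relevant derivatives nonvanishing and `R > 0`, then `R` splits as a product:
`R(y,z) = L(y)·M(z)`. -/
theorem stmt_17 (f : ℝ → ℝ → ℝ → ℝ) (P K Ps Ks : ℝ → ℝ) (R Rs : ℝ → ℝ → ℝ)
    (ax bx ay b_y az bz : ℝ) (hx : ax < bx) (hy : ay < b_y) (hz : az < bz)
    (hP : ContDiff ℝ (⊤ : ℕ∞) P) (hK : ContDiff ℝ (⊤ : ℕ∞) K)
    (hPs : ContDiff ℝ (⊤ : ℕ∞) Ps) (hKs : ContDiff ℝ (⊤ : ℕ∞) Ks)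
    (hR : ContDiff ℝ (⊤ : ℕ∞) fun u : ℝ × ℝ => R u.1 u.2)
    (hRs : ContDiff ℝ (⊤ : ℕ∞) fun u : ℝ × ℝ => Rs u.1 u.2)
    (hf1 : ∀ x ∈ Ioo ax bx, ∀ y ∈ Ioo ay b_y, ∀ z ∈ Ioo az bz,
      f x y z = P (K x * R y z))
    (hf2 : ∀ x ∈ Ioo ax bx, ∀ y ∈ Ioo ay b_y, ∀ z ∈ Ioo az bz,
      f x y z = Ps (Ks y * Rs x z))
    (hP' : ∀ t, deriv P t ≠ 0) (hPs' : ∀ t, deriv Ps t ≠ 0)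
    (hK0 : ∀ x ∈ Ioo ax bx, K x ≠ 0) (hK' : ∀ x ∈ Ioo ax bx, deriv K x ≠ 0)
    (hKs0 : ∀ y ∈ Ioo ay b_y, Ks y ≠ 0) (hKs' : ∀ y ∈ Ioo ay b_y, deriv Ks y ≠ 0)
    (hRpos : ∀ y ∈ Ioo ay b_y, ∀ z ∈ Ioo az bz, 0 < R y z)
    (hRz : ∀ y ∈ Ioo ay b_y, ∀ z ∈ Ioo az bz, deriv (fun z' => R y z') z ≠ 0)
    (hRsz : ∀ x ∈ Ioo ax bx, ∀ z ∈ Ioo az bz, deriv (fun z' => Rs x z') z ≠ 0) :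
    ∃ Lf Mf : ℝ → ℝ, ∀ y ∈ Ioo ay b_y, ∀ z ∈ Ioo az bz, R y z = Lf y * Mf z := by
  set x0 : ℝ := (ax + bx) / 2 with hx0def
  set y0 : ℝ := (ay + b_y) / 2 with hy0def
  set z0 : ℝ := (az + bz) / 2 with hz0def
  have hx0 : x0 ∈ Ioo ax bx := ⟨by simp [hx0def]; linarith, by simp [hx0def]; linarith⟩
  have hy0 : y0 ∈ Ioo ay b_y := ⟨by simp [hy0def]; linarith, by simp [hy0def]; linarith⟩
  have hz0 : z0 ∈ Ioo az bz := ⟨by simp [hz0def]; linarith, by simp [hz0def]; linarith⟩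
  -- differentiability facts
  have hRd : ∀ y : ℝ, Differentiable ℝ (fun z' => R y z') :=
    fun y => (hR.differentiable (by simp)).comp ((differentiable_const y).prodMk differentiable_id)
  have hRsd : ∀ x : ℝ, Differentiable ℝ (fun z' => Rs x z') :=
    fun x => (hRs.differentiable (by simp)).comp ((differentiable_const x).prodMk differentiable_id)
  have hRsdx : ∀ z : ℝ, Differentiable ℝ (fun x' => Rs x' z) :=
    fun z => (hRs.differentiable (by simp)).comp (differentiable_id.prodMk (differentiable_const z))
  have hPd := hP.differentiable (by simp)
  have hPsd := hPs.differentiable (by simp)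
  have hKd := hK.differentiable (by simp)
  -- the key PDE-style identity
  have star : ∀ y ∈ Ioo ay b_y, ∀ z ∈ Ioo az bz,
      deriv K x0 * R y z * deriv (fun z' => Rs x0 z') z
        = K x0 * deriv (fun z' => R y z') z * deriv (fun x' => Rs x' z) x0 := by
    intro y hyy z hzz
    set a := K x0 * R y z with ha
    set b := Ks y * Rs x0 z with hb
    -- z-derivative equation
    have d1 : HasDerivAt (fun z' => P (K x0 * R y z'))
        (deriv P a * (K x0 * deriv (fun z' => R y z') z)) z :=
      (hPd a).hasDerivAt.comp z (((hRd y z).hasDerivAt).const_mul (K x0))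
    have d2 : HasDerivAt (fun z' => Ps (Ks y * Rs x0 z'))
        (deriv Ps b * (Ks y * deriv (fun z' => Rs x0 z') z)) z :=
      (hPsd b).hasDerivAt.comp z (((hRsd x0 z).hasDerivAt).const_mul (Ks y))
    have heq : (fun z' => P (K x0 * R y z')) =ᶠ[nhds z] fun z' => Ps (Ks y * Rs x0 z') := by
      filter_upwards [Ioo_mem_nhds hzz.1 hzz.2] with z' hz'
      rw [← hf1 x0 hx0 y hyy z' hz', hf2 x0 hx0 y hyy z' hz']
    have E2 : deriv P a * (K x0 * deriv (fun z' => R y z') z)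
        = deriv Ps b * (Ks y * deriv (fun z' => Rs x0 z') z) := by
      have := d1.deriv
      rw [heq.deriv_eq, d2.deriv] at this
      exact this.symm
    -- x-derivative equation
    have d3 : HasDerivAt (fun x' => P (K x' * R y z))
        (deriv P a * (deriv K x0 * R y z)) x0 :=
      (hPd a).hasDerivAt.comp x0 (((hKd x0).hasDerivAt).mul_const (R y z))
    have d4 : HasDerivAt (fun x' => Ps (Ks y * Rs x' z))
        (deriv Ps b * (Ks y * deriv (fun x' => Rs x' z) x0)) x0 :=
      (hPsd b).hasDerivAt.comp x0 (((hRsdx z x0).hasDerivAt).const_mul (Ks y))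
    have heqx : (fun x' => P (K x' * R y z)) =ᶠ[nhds x0] fun x' => Ps (Ks y * Rs x' z) := by
      filter_upwards [Ioo_mem_nhds hx0.1 hx0.2] with x' hx'
      rw [← hf1 x' hx' y hyy z hzz, hf2 x' hx' y hyy z hzz]
    have E1 : deriv P a * (deriv K x0 * R y z)
        = deriv Ps b * (Ks y * deriv (fun x' => Rs x' z) x0) := by
      have := d3.deriv
      rw [heqx.deriv_eq, d4.deriv] at this
      exact this.symm
    -- combine E1 and E2, cancelling `deriv P a` and `Ks y`
    have hPa := hP' a
    have hKsy := hKs0 y hyy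
    apply mul_left_cancel₀ (mul_ne_zero hPa hKsy)
    have : (deriv P a * (deriv K x0 * R y z)) * (Ks y * deriv (fun z' => Rs x0 z') z)
        = (deriv P a * (K x0 * deriv (fun z' => R y z') z))
          * (Ks y * deriv (fun x' => Rs x' z) x0) := by
      rw [E1, E2]; ring
    nlinarith [this]
  -- deduce: (∂z R)/R is independent of y
  have key : ∀ y ∈ Ioo ay b_y, ∀ z ∈ Ioo az bz,
      deriv (fun z' => R y z') z * R y0 z = deriv (fun z' => R y0 z') z * R y z := by
    intro y hyy z hzz
    have e1 := star y hyy z hzz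
    have e2 := star y0 hy0 z hzz
    have hrsx : deriv (fun x' => Rs x' z) x0 ≠ 0 := by
      intro h0
      rw [h0, mul_zero] at e2
      exact (mul_ne_zero (mul_ne_zero (hK' x0 hx0) (hRpos y0 hy0 z hzz).ne')
        (hRsz x0 hx0 z hzz)) e2
    apply mul_right_cancel₀ (mul_ne_zero (hK0 x0 hx0) hrsx)
    linear_combination R y z * e2 - R y0 z * e1
  -- the log-difference is constant in z
  have const : ∀ y ∈ Ioo ay b_y, ∀ z ∈ Ioo az bz,
      Real.log (R y z) - Real.log (R y0 z)
        = Real.log (R y z0) - Real.log (R y0 z0) := by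
    intro y hyy z hzz
    set g : ℝ → ℝ := fun z' => Real.log (R y z') - Real.log (R y0 z') with hgdef
    have hg : ∀ w ∈ Ioo az bz, HasDerivWithinAt g 0 (Ioo az bz) w := by
      intro w hww
      have h1 : HasDerivAt (fun z' => Real.log (R y z'))
          (deriv (fun z' => R y z') w / R y w) w :=
        ((hRd y w).hasDerivAt).log (hRpos y hyy w hww).ne'
      have h2 : HasDerivAt (fun z' => Real.log (R y0 z'))
          (deriv (fun z' => R y0 z') w / R y0 w) w :=
        ((hRd y0 w).hasDerivAt).log (hRpos y0 hy0 w hww).ne'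
      have h3 := (h1.sub h2)
      have hzero : deriv (fun z' => R y z') w / R y w
          - deriv (fun z' => R y0 z') w / R y0 w = 0 := by
        have hk := key y hyy w hww
        have p1 := (hRpos y hyy w hww).ne'
        have p2 := (hRpos y0 hy0 w hww).ne'
        field_simp
        linarith [hk]
      rw [hzero] at h3
      exact h3.hasDerivWithinAt
    have := Convex.norm_image_sub_le_of_norm_hasDerivWithin_le (C := 0) (f' := fun _ => (0 : ℝ))
      hg (fun w _ => by simp) (convex_Ioo az bz) hz0 hzz
    simp only [zero_mul, norm_le_zero_iff, sub_eq_zero] at this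
    exact this
  -- finish: exponentiate
  refine ⟨fun y => R y z0, fun z => R y0 z / R y0 z0, ?_⟩
  intro y hyy z hzz
  have h := const y hyy z hzz
  have p1 := hRpos y hyy z hzz
  have p2 := hRpos y0 hy0 z hzz
  have p3 := hRpos y hyy z0 hz0
  have p4 := hRpos y0 hy0 z0 hz0
  have : Real.log (R y z) = Real.log (R y z0 * (R y0 z / R y0 z0)) := by
    rw [Real.log_mul p3.ne' (by positivity), Real.log_div p2.ne' p4.ne']
    linarith
  have := Real.log_injOn_pos (mem_Ioi.2 p1) (mem_Ioi.2 (by positivity)) this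
  exact this
end

section
/- Let f: ℝ³ → ℝ be smooth with f(x,y,z) = p(k(x) + r(y,z)) and f(x,y,z) = P(K(y) + R(x,z)) on an open box, where p', P', k', K' are nonvanishing and r, R are smooth. Then ∂r/∂y is independent of z, and consequently r(y,z) = l(y) + m(z) for some smooth functions l, m. -/
open Set

private lemma const_of_deriv_zero_aux {a b : ℝ} {g : ℝ → ℝ} (hg : Differentiable ℝ g)
    (h : ∀ t ∈ Ioo a b, deriv g t = 0) {s t : ℝ} (hs : s ∈ Ioo a b) (ht : t ∈ Ioo a b)
    (hst : s < t) : g s = g t := by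
  obtain ⟨c, hc, hc'⟩ := exists_deriv_eq_slope g hst (hg.continuous.continuousOn)
    (hg.differentiableOn)
  have hcmem : c ∈ Ioo a b := ⟨lt_trans hs.1 hc.1, lt_trans hc.2 ht.2⟩
  have : (g t - g s) / (t - s) = 0 := by rw [← hc', h c hcmem]
  have h2 : g t - g s = 0 := by
    rcases div_eq_zero_iff.mp this with h2 | h2
    · exact h2
    · exfalso; linarith
  linarith

private lemma const_of_deriv_zero {a b : ℝ} {g : ℝ → ℝ} (hg : Differentiable ℝ g)
    (h : ∀ t ∈ Ioo a b, deriv g t = 0) {s t : ℝ} (hs : s ∈ Ioo a b) (ht : t ∈ Ioo a b) :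
    g s = g t := by
  rcases lt_trichotomy s t with h1 | h1 | h1
  · exact const_of_deriv_zero_aux hg h hs ht h1
  · rw [h1]
  · exact (const_of_deriv_zero_aux hg h ht hs h1).symm

/-- If `f(x,y,z) = p(k(x) + r(y,z)) = P(K(y) + R(x,z))` on an open box, with
`p', P', k', K'` nonvanishing, then `∂r/∂y` is independent of `z`, and consequently
`r(y,z) = l(y) + m(z)` for smooth functions `l, m`. -/
theorem stmt_18 (f : ℝ → ℝ → ℝ → ℝ) (p P k K : ℝ → ℝ) (r R : ℝ → ℝ → ℝ)
    (ax bx ay b_y az bz : ℝ) (hx : ax < bx) (hy : ay < b_y) (hz : az < bz)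
    (hp : ContDiff ℝ (⊤ : ℕ∞) p) (hP : ContDiff ℝ (⊤ : ℕ∞) P)
    (hk : ContDiff ℝ (⊤ : ℕ∞) k) (hK : ContDiff ℝ (⊤ : ℕ∞) K)
    (hr : ContDiff ℝ (⊤ : ℕ∞) fun u : ℝ × ℝ => r u.1 u.2)
    (hR : ContDiff ℝ (⊤ : ℕ∞) fun u : ℝ × ℝ => R u.1 u.2)
    (hf1 : ∀ x ∈ Ioo ax bx, ∀ y ∈ Ioo ay b_y, ∀ z ∈ Ioo az bz,
      f x y z = p (k x + r y z))
    (hf2 : ∀ x ∈ Ioo ax bx, ∀ y ∈ Ioo ay b_y, ∀ z ∈ Ioo az bz,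
      f x y z = P (K y + R x z))
    (hp' : ∀ t, deriv p t ≠ 0) (hP' : ∀ t, deriv P t ≠ 0)
    (hk' : ∀ x ∈ Ioo ax bx, deriv k x ≠ 0)
    (hK' : ∀ y ∈ Ioo ay b_y, deriv K y ≠ 0) :
    (∀ y ∈ Ioo ay b_y, ∀ z ∈ Ioo az bz, ∀ z' ∈ Ioo az bz,
      deriv (fun y' => r y' z) y = deriv (fun y' => r y' z') y) ∧
    ∃ l m : ℝ → ℝ, ContDiffOn ℝ (⊤ : ℕ∞) l (Ioo ay b_y) ∧ ContDiffOn ℝ (⊤ : ℕ∞) m (Ioo az bz) ∧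
      ∀ y ∈ Ioo ay b_y, ∀ z ∈ Ioo az bz, r y z = l y + m z := by
  -- differentiability facts
  have Hp : Differentiable ℝ p := hp.differentiable (by simp)
  have HP : Differentiable ℝ P := hP.differentiable (by simp)
  have Hk : Differentiable ℝ k := hk.differentiable (by simp)
  have HK : Differentiable ℝ K := hK.differentiable (by simp)
  have Hr : Differentiable ℝ (fun u : ℝ × ℝ => r u.1 u.2) := hr.differentiable (by simp)
  have HR : Differentiable ℝ (fun u : ℝ × ℝ => R u.1 u.2) := hR.differentiable (by simp)
  have hdr1 : ∀ z, Differentiable ℝ (fun y' => r y' z) := fun z =>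
    Hr.comp (differentiable_id.prodMk (differentiable_const _))
  have hdr2 : ∀ y, Differentiable ℝ (fun z' => r y z') := fun y =>
    Hr.comp ((differentiable_const _).prodMk differentiable_id)
  have hdR1 : ∀ z, Differentiable ℝ (fun x' => R x' z) := fun z =>
    HR.comp (differentiable_id.prodMk (differentiable_const _))
  have hdR2 : ∀ x, Differentiable ℝ (fun z' => R x z') := fun x =>
    HR.comp ((differentiable_const _).prodMk differentiable_id)
  -- key chain rule identities
  have e1 : ∀ x ∈ Ioo ax bx, ∀ y ∈ Ioo ay b_y, ∀ z ∈ Ioo az bz,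
      deriv p (k x + r y z) * deriv (fun y' => r y' z) y
        = deriv P (K y + R x z) * deriv K y := by
    intro x hxm y hym z hzm
    have hA : HasDerivAt (fun y' => p (k x + r y' z))
        (deriv p (k x + r y z) * deriv (fun y' => r y' z) y) y :=
      (Hp (k x + r y z)).hasDerivAt.comp y ((hdr1 z y).hasDerivAt.const_add (k x))
    have hB : HasDerivAt (fun y' => P (K y' + R x z))
        (deriv P (K y + R x z) * deriv K y) y :=
      (HP (K y + R x z)).hasDerivAt.comp y ((HK y).hasDerivAt.add_const (R x z))
    have heq : (fun y' => p (k x + r y' z)) =ᶠ[nhds y] (fun y' => P (K y' + R x z)) := by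
      filter_upwards [Ioo_mem_nhds hym.1 hym.2] with t ht
      rw [← hf1 x hxm t ht z hzm, hf2 x hxm t ht z hzm]
    have hd := heq.deriv_eq
    rw [hA.deriv, hB.deriv] at hd
    exact hd
  have e2 : ∀ x ∈ Ioo ax bx, ∀ y ∈ Ioo ay b_y, ∀ z ∈ Ioo az bz,
      deriv p (k x + r y z) * deriv (fun z' => r y z') z
        = deriv P (K y + R x z) * deriv (fun z' => R x z') z := by
    intro x hxm y hym z hzm
    have hA : HasDerivAt (fun z' => p (k x + r y z'))
        (deriv p (k x + r y z) * deriv (fun z' => r y z') z) z :=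
      (Hp (k x + r y z)).hasDerivAt.comp z ((hdr2 y z).hasDerivAt.const_add (k x))
    have hB : HasDerivAt (fun z' => P (K y + R x z'))
        (deriv P (K y + R x z) * deriv (fun z' => R x z') z) z :=
      (HP (K y + R x z)).hasDerivAt.comp z ((hdR2 x z).hasDerivAt.const_add (K y))
    have heq : (fun z' => p (k x + r y z')) =ᶠ[nhds z] (fun z' => P (K y + R x z')) := by
      filter_upwards [Ioo_mem_nhds hzm.1 hzm.2] with t ht
      rw [← hf1 x hxm y hym t ht, hf2 x hxm y hym t ht]
    have hd := heq.deriv_eq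
    rw [hA.deriv, hB.deriv] at hd
    exact hd
  have e3 : ∀ x ∈ Ioo ax bx, ∀ y ∈ Ioo ay b_y, ∀ z ∈ Ioo az bz,
      deriv p (k x + r y z) * deriv k x
        = deriv P (K y + R x z) * deriv (fun x' => R x' z) x := by
    intro x hxm y hym z hzm
    have hA : HasDerivAt (fun x' => p (k x' + r y z))
        (deriv p (k x + r y z) * deriv k x) x :=
      (Hp (k x + r y z)).hasDerivAt.comp x ((Hk x).hasDerivAt.add_const (r y z))
    have hB : HasDerivAt (fun x' => P (K y + R x' z))
        (deriv P (K y + R x z) * deriv (fun x' => R x' z) x) x :=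
      (HP (K y + R x z)).hasDerivAt.comp x ((hdR1 z x).hasDerivAt.const_add (K y))
    have heq : (fun x' => p (k x' + r y z)) =ᶠ[nhds x] (fun x' => P (K y + R x' z)) := by
      filter_upwards [Ioo_mem_nhds hxm.1 hxm.2] with t ht
      rw [← hf1 t ht y hym z hzm, hf2 t ht y hym z hzm]
    have hd := heq.deriv_eq
    rw [hA.deriv, hB.deriv] at hd
    exact hd
  -- algebraic consequences
  have hE : ∀ x ∈ Ioo ax bx, ∀ y ∈ Ioo ay b_y, ∀ z ∈ Ioo az bz,
      deriv (fun y' => r y' z) y * deriv (fun x' => R x' z) x = deriv k x * deriv K y := by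
    intro x hxm y hym z hzm
    apply mul_left_cancel₀ (hp' (k x + r y z))
    calc deriv p (k x + r y z) * (deriv (fun y' => r y' z) y * deriv (fun x' => R x' z) x)
        = (deriv p (k x + r y z) * deriv (fun y' => r y' z) y) * deriv (fun x' => R x' z) x := by
          ring
      _ = (deriv P (K y + R x z) * deriv K y) * deriv (fun x' => R x' z) x := by
          rw [e1 x hxm y hym z hzm]
      _ = (deriv P (K y + R x z) * deriv (fun x' => R x' z) x) * deriv K y := by ring
      _ = (deriv p (k x + r y z) * deriv k x) * deriv K y := by rw [e3 x hxm y hym z hzm]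
      _ = deriv p (k x + r y z) * (deriv k x * deriv K y) := by ring
  have hC : ∀ x ∈ Ioo ax bx, ∀ y ∈ Ioo ay b_y, ∀ z ∈ Ioo az bz,
      deriv (fun z' => r y z') z * deriv K y
        = deriv (fun y' => r y' z) y * deriv (fun z' => R x z') z := by
    intro x hxm y hym z hzm
    apply mul_left_cancel₀ (hp' (k x + r y z))
    calc deriv p (k x + r y z) * (deriv (fun z' => r y z') z * deriv K y)
        = (deriv p (k x + r y z) * deriv (fun z' => r y z') z) * deriv K y := by ring
      _ = (deriv P (K y + R x z) * deriv (fun z' => R x z') z) * deriv K y := by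
          rw [e2 x hxm y hym z hzm]
      _ = (deriv P (K y + R x z) * deriv K y) * deriv (fun z' => R x z') z := by ring
      _ = (deriv p (k x + r y z) * deriv (fun y' => r y' z) y) * deriv (fun z' => R x z') z := by
          rw [e1 x hxm y hym z hzm]
      _ = deriv p (k x + r y z) * (deriv (fun y' => r y' z) y * deriv (fun z' => R x z') z) := by
          ring
  -- fix a point in the box
  set x₀ : ℝ := (ax + bx) / 2 with hx₀def
  have hx₀ : x₀ ∈ Ioo ax bx := ⟨by simp only [hx₀def]; linarith, by simp only [hx₀def]; linarith⟩
  set y₀ : ℝ := (ay + b_y) / 2 with hy₀def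
  have hy₀ : y₀ ∈ Ioo ay b_y := ⟨by simp only [hy₀def]; linarith, by simp only [hy₀def]; linarith⟩
  set z₀ : ℝ := (az + bz) / 2 with hz₀def
  have hz₀ : z₀ ∈ Ioo az bz := ⟨by simp only [hz₀def]; linarith, by simp only [hz₀def]; linarith⟩
  -- ∂r/∂z is independent of y
  have hRx0 : ∀ z ∈ Ioo az bz, deriv (fun x' => R x' z) x₀ ≠ 0 := by
    intro z hzm hzero
    have h := hE x₀ hx₀ y₀ hy₀ z hzm
    rw [hzero, mul_zero] at h
    exact (mul_ne_zero (hk' x₀ hx₀) (hK' y₀ hy₀)) h.symm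
  have hrz : ∀ y ∈ Ioo ay b_y, ∀ z ∈ Ioo az bz,
      deriv (fun z' => r y z') z
        = deriv k x₀ * deriv (fun z' => R x₀ z') z / deriv (fun x' => R x' z) x₀ := by
    intro y hym z hzm
    have hc := hC x₀ hx₀ y hym z hzm
    have he := hE x₀ hx₀ y hym z hzm
    rw [eq_div_iff (hRx0 z hzm)]
    apply mul_left_cancel₀ (hK' y hym)
    calc deriv K y * (deriv (fun z' => r y z') z * deriv (fun x' => R x' z) x₀)
        = (deriv (fun z' => r y z') z * deriv K y) * deriv (fun x' => R x' z) x₀ := by ring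
      _ = (deriv (fun y' => r y' z) y * deriv (fun z' => R x₀ z') z)
            * deriv (fun x' => R x' z) x₀ := by rw [hc]
      _ = (deriv (fun y' => r y' z) y * deriv (fun x' => R x' z) x₀)
            * deriv (fun z' => R x₀ z') z := by ring
      _ = (deriv k x₀ * deriv K y) * deriv (fun z' => R x₀ z') z := by rw [he]
      _ = deriv K y * (deriv k x₀ * deriv (fun z' => R x₀ z') z) := by ring
  -- the splitting identity
  have hsplit : ∀ y ∈ Ioo ay b_y, ∀ z ∈ Ioo az bz,
      r y z = r y z₀ + (r y₀ z - r y₀ z₀) := by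
    intro y hym z hzm
    have hg : Differentiable ℝ (fun z' => r y z' - r y₀ z') := (hdr2 y).sub (hdr2 y₀)
    have hd0 : ∀ t ∈ Ioo az bz, deriv (fun z' => r y z' - r y₀ z') t = 0 := by
      intro t ht
      rw [deriv_fun_sub (hdr2 y t) (hdr2 y₀ t), hrz y hym t ht, hrz y₀ hy₀ t ht, sub_self]
    have := const_of_deriv_zero hg hd0 hzm hz₀
    linarith
  constructor
  · intro y hym z hzm z' hzm'
    have key : ∀ w ∈ Ioo az bz, deriv (fun y' => r y' w) y = deriv (fun y' => r y' z₀) y := by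
      intro w hw
      have hEq : (fun y' => r y' w) =ᶠ[nhds y]
          fun y' => r y' z₀ + (r y₀ w - r y₀ z₀) := by
        filter_upwards [Ioo_mem_nhds hym.1 hym.2] with t ht
        exact hsplit t ht w hw
      rw [hEq.deriv_eq, deriv_add_const]
    rw [key z hzm, key z' hzm']
  · refine ⟨fun y => r y z₀, fun z => r y₀ z - r y₀ z₀, ?_, ?_, ?_⟩
    · exact (hr.comp (contDiff_id.prodMk contDiff_const)).contDiffOn
    · exact ((hr.comp (contDiff_const.prodMk contDiff_id)).sub contDiff_const).contDiffOn
    · intro y hym z hzm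
      simpa using hsplit y hym z hzm
end
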